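/- arXiv:2111.12190 — 2 statements merged into one kernel-verified Lean document; each statement's English description precedes it below -/
import Mathlib

section
/- In the Iwahori-Hecke algebra of type $C_2$ over a field of characteristic $2$ specialization (or equivalently considering the $2$-canonical basis), the element $c_{sts} := b_{sts} + b_s$ satisfies $b_s \cdot b_{ts} = c_{sts}$, i.e., the product $b_s b_{ts}$ equals $b_s + b_{sts}$ and hence equals $c_{sts}$ exactly (not merely up to a unit). -/
/-- The Weyl group of type `C₂` (dihedral of order 8), elements listed by reduced word. -/
inductive C2 : Type
  | e | s | t | st | ts | sts | tst | w0
  deriving DecidableEq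

instance instFintypeC2 : Fintype C2 where
  elems := {C2.e, C2.s, C2.t, C2.st, C2.ts, C2.sts, C2.tst, C2.w0}
  complete := fun x => by cases x <;> simp

namespace C2

/-- Left multiplication by the simple reflection `s`. -/
def sMul : C2 → C2
  | e => s | s => e | t => st | st => t | ts => sts | sts => ts | tst => w0 | w0 => tst

/-- Left multiplication by the simple reflection `t`. -/
def tMul : C2 → C2
  | e => t | t => e | s => ts | ts => s | st => tst | tst => st | sts => w0 | w0 => sts

/-- The Coxeter length. -/
def len : C2 → ℕ
  | e => 0 | s => 1 | t => 1 | st => 2 | ts => 2 | sts => 3 | tst => 3 | w0 => 4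

end C2

open LaurentPolynomial

/-- Elements of the Hecke algebra of type `C₂` over `ℤ[v,v⁻¹]`, as coordinate vectors in the
standard basis `{H_w}`. -/
abbrev HeckeC2 : Type := C2 → LaurentPolynomial ℤ

namespace HeckeC2

/-- Left multiplication by `H_s`, determined by `H_s H_w = H_{sw}` if `ℓ(sw) > ℓ(w)` and
`H_s H_w = H_{sw} + (v⁻¹ - v) H_w` otherwise. -/
noncomputable def Ls (f : HeckeC2) : HeckeC2 := fun u =>
  f (C2.sMul u) + (if C2.len (C2.sMul u) < C2.len u then (T (-1) - T 1) * f u else 0)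

/-- Left multiplication by `H_t`. -/
noncomputable def Lt (f : HeckeC2) : HeckeC2 := fun u =>
  f (C2.tMul u) + (if C2.len (C2.tMul u) < C2.len u then (T (-1) - T 1) * f u else 0)

/-- Left multiplication by the standard basis element `H_w`. -/
noncomputable def Lw : C2 → HeckeC2 → HeckeC2
  | C2.e => id
  | C2.s => Ls
  | C2.t => Lt
  | C2.st => Ls ∘ Lt
  | C2.ts => Lt ∘ Ls
  | C2.sts => Ls ∘ Lt ∘ Ls
  | C2.tst => Lt ∘ Ls ∘ Lt
  | C2.w0 => Ls ∘ Lt ∘ Ls ∘ Lt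

/-- The product in the Hecke algebra, expanding the left factor in the standard basis. -/
noncomputable def mul (x y : HeckeC2) : HeckeC2 := fun u => ∑ w : C2, x w * Lw w y u

/-- The standard basis element `H_w`. -/
noncomputable def H (w : C2) : HeckeC2 := fun u => if u = w then 1 else 0

/-- The Kazhdan–Lusztig basis element `b_w = ∑_{y ≤ w} v^{ℓ(w) - ℓ(y)} H_y` (all KL polynomials
are trivial in dihedral type, and `y < w` iff `ℓ(y) < ℓ(w)`). -/
noncomputable def b (w : C2) : HeckeC2 := fun u =>
  if u = w then 1 else if C2.len u < C2.len w then T ((C2.len w : ℤ) - C2.len u) else 0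

end HeckeC2

open HeckeC2

/-! Since `b_s = H_s + v H_e`, the product `b_s b_{ts}` is `H_s b_{ts} + v b_{ts}`; comparing
coefficients in the standard basis, the quadratic relation `H_s² = 1 + (v⁻¹ - v) H_s` turns the
coefficient at `s` into `v² + (v⁻¹ - v) v + v² = 1 + v²`, and the extra `1` is exactly `b_s`. -/

namespace HeckeC2

lemma mul_add_left (x x' y : HeckeC2) : mul (x + x') y = mul x y + mul x' y := by
  funext u
  simp only [mul, Pi.add_apply, add_mul, Finset.sum_add_distrib]

lemma mul_smul_left (a : ℤ[T;T⁻¹]) (x y : HeckeC2) : mul (a • x) y = a • mul x y := by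
  funext u
  simp only [mul, Pi.smul_apply, smul_eq_mul, mul_assoc, Finset.mul_sum]

lemma mul_H_left (w : C2) (y : HeckeC2) : mul (H w) y = Lw w y := by
  funext u
  simp [mul, H]

lemma b_s_eq : b C2.s = H C2.s + (T 1 : ℤ[T;T⁻¹]) • H C2.e := by
  funext u
  cases u <;> simp [b, H, C2.len]

lemma b_s_mul (y : HeckeC2) : mul (b C2.s) y = Ls y + (T 1 : ℤ[T;T⁻¹]) • y := by
  rw [b_s_eq, mul_add_left, mul_smul_left, mul_H_left, mul_H_left]
  rfl

lemma Ls_b_ts_add_smul_b_ts : Ls (b C2.ts) + (T 1 : ℤ[T;T⁻¹]) • b C2.ts = b C2.sts + b C2.s := by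
  funext u
  cases u <;> simp [Ls, b, C2.sMul, C2.len, -T_mul, sub_mul, ← T_add, add_comm]

end HeckeC2

/-- In the Hecke algebra of type `C₂`, with the `2`-canonical basis element
`c_{sts} = b_{sts} + b_s`, the product `b_s ⬝ b_{ts}` equals `c_{sts}` exactly. -/
theorem C2_bs_bts_eq_csts (csts : HeckeC2)
    (hcsts : csts = fun u => b C2.sts u + b C2.s u) :
    mul (b C2.s) (b C2.ts) = csts := by
  rw [hcsts, b_s_mul]
  exact Ls_b_ts_add_smul_b_ts
end

section
/- Over the ring $S = R \otimes_{R^W} R$ where $R = \mathbb{Q}[\alpha,\beta]$ and $R^W$ is the invariant subring for the $C_2$ Weyl group action, the $2\times 2$ matrices $d_1 = \begin{pmatrix} \gamma_l - \gamma_r & \alpha_l + \alpha_r \\ -\tfrac{\delta_l - \delta_r}{2} & \tfrac{\beta_l + \beta_r}{2} \end{pmatrix}$ and $d_2 = \begin{pmatrix} \tfrac{\beta_l + \beta_r}{2} & -(\alpha_l + \alpha_r) \\ \tfrac{\delta_l - \delta_r}{2} & \gamma_l - \gamma_r \end{pmatrix}$ satisfy $d_1 d_2 = d_2 d_1 = 0$.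 -/
open MvPolynomial TensorProduct

noncomputable section

/-- `R = ℚ[α, β]` with `α = X 0`, `β = X 1`. -/
abbrev RQ : Type := MvPolynomial (Fin 2) ℚ

/-- The substitution `s : α ↦ -α, β ↦ 2α + β`. -/
def sQ : RQ →ₐ[ℚ] RQ := aeval ![-X 0, 2 * X 0 + X 1]

/-- The substitution `t : α ↦ α + β, β ↦ -β`. -/
def tQ : RQ →ₐ[ℚ] RQ := aeval ![X 0 + X 1, -X 1]

/-- The invariant subring `R^W` for the `C₂` Weyl group action on `R = ℚ[α,β]`. -/
def RW : Subalgebra ℚ RQ :=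
  AlgHom.equalizer sQ (AlgHom.id ℚ RQ) ⊓ AlgHom.equalizer tQ (AlgHom.id ℚ RQ)

/-- `S = R ⊗_{R^W} R`. -/
abbrev SC2 : Type := TensorProduct RW RQ RQ

/-- `f ↦ f_l = f ⊗ 1` in `S`. -/
def lft (f : RQ) : SC2 := f ⊗ₜ 1

/-- `f ↦ f_r = 1 ⊗ f` in `S`. -/
def rgt (f : RQ) : SC2 := 1 ⊗ₜ f
/-!
The matrix `d₂` is the adjugate of `d₁`, so `d₁ d₂ = d₂ d₁ = det d₁ • 1`. Writing
`q = 2α² + 2αβ + β² = γβ + αδ`, the determinant of `d₁` is `(q_l - q_r) / 2`, which vanishes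
because `q` is `W`-invariant and invariants pass through the tensor sign.
-/

lemma lft_eq_includeLeftRingHom (f : RQ) :
    lft f = Algebra.TensorProduct.includeLeftRingHom f := rfl

lemma rgt_eq_includeRight (f : RQ) : rgt f = Algebra.TensorProduct.includeRight f := rfl

lemma mem_RW_iff {f : RQ} : f ∈ RW ↔ sQ f = f ∧ tQ f = f := Iff.rfl

lemma lft_eq_rgt_of_mem {f : RQ} (hf : f ∈ RW) : lft f = rgt f :=
  calc lft f = algebraMap RW SC2 ⟨f, hf⟩ := rfl
    _ = rgt f := Algebra.TensorProduct.algebraMap_apply' _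

lemma C_mem_RW (c : ℚ) : C c ∈ RW :=
  mem_RW_iff.2 ⟨aeval_C _ _, aeval_C _ _⟩

lemma quadratic_mem_RW : (2 * X 0 ^ 2 + 2 * X 0 * X 1 + X 1 ^ 2 : RQ) ∈ RW := by
  refine mem_RW_iff.2 ⟨?_, ?_⟩ <;>
  · simp only [sQ, tQ, map_add, map_mul, map_pow, map_ofNat, aeval_X, Matrix.cons_val_zero,
      Matrix.cons_val_one]
    ring

/-- Over `S = R ⊗_{R^W} R` with `R = ℚ[α,β]`, `γ = α + β`, `δ = 2α + β`, the `2×2` matrices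
`d₁ = [[γ_l - γ_r, α_l + α_r], [-(δ_l - δ_r)/2, (β_l + β_r)/2]]` and
`d₂ = [[(β_l + β_r)/2, -(α_l + α_r)], [(δ_l - δ_r)/2, γ_l - γ_r]]`
satisfy `d₁d₂ = d₂d₁ = 0`. -/
theorem C2_koszul_differentials_square_zero
    (α β γ δ : RQ) (hα : α = X 0) (hβ : β = X 1) (hγ : γ = α + β) (hδ : δ = 2 * α + β)
    (d1 d2 : Matrix (Fin 2) (Fin 2) SC2)
    (hd1 : d1 = !![lft γ - rgt γ, lft α + rgt α;
                   -(lft (C (1/2 : ℚ) * δ) - rgt (C (1/2 : ℚ) * δ)),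
                   lft (C (1/2 : ℚ) * β) + rgt (C (1/2 : ℚ) * β)])
    (hd2 : d2 = !![lft (C (1/2 : ℚ) * β) + rgt (C (1/2 : ℚ) * β), -(lft α + rgt α);
                   lft (C (1/2 : ℚ) * δ) - rgt (C (1/2 : ℚ) * δ), lft γ - rgt γ]) :
    d1 * d2 = 0 ∧ d2 * d1 = 0 := by
  subst hα hβ hγ hδ
  have hadj : d2 = d1.adjugate := by rw [hd1, hd2, Matrix.adjugate_fin_two_of, neg_neg]
  have hdet : d1.det = 0 := by
    have hq := lft_eq_rgt_of_mem quadratic_mem_RW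
    have hhalf := lft_eq_rgt_of_mem (C_mem_RW (1 / 2))
    rw [hd1, Matrix.det_fin_two_of]
    simp only [lft_eq_includeLeftRingHom, rgt_eq_includeRight, map_add, map_mul, map_pow,
      map_ofNat] at hq hhalf ⊢
    rw [← hhalf]
    linear_combination Algebra.TensorProduct.includeLeftRingHom (C (1 / 2 : ℚ)) * hq
  rw [hadj, Matrix.mul_adjugate, Matrix.adjugate_mul, hdet, Matrix.smul_one_eq_diagonal,
    Matrix.diagonal_zero]
  exact ⟨rfl, rfl⟩

end
end
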